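/- Let w be a weight on the unit circle with all Toeplitz determinants nonzero and let (φ_n, φ̄_n) be a BOPS for w, with reciprocal polynomials φ*_n and associated functions ξ_n, ξ*_n. Then: (i) for every n ≥ 0 and every z ∈ ℂ, I_n[(ζ−z)·w] = (−1)^n I_n[w] φ_n(z)/κ_n and I_n[(1−zζ^(−1))·w] = I_n[w] φ*_n(z)/κ_n; (ii) for every n ≥ 1 and every z ∈ ℂ∖(𝕋∪{0}), I_n[w/(1−zζ^(−1))] = I_n[w] κ_(n−1) ξ_(n−1)(z)/(2 z^(n−1)) and I_n[w/(ζ−z)] = (−1)^n I_n[w] κ_(n−1) ξ*_(n−1)(z)/(2 z^n). -/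

import Mathlib

open Polynomial Matrix Filter

noncomputable section

/-- `(1/(2πi)) ∮_𝕋 f(ζ) dζ/ζ`, written as `(1/(2π)) ∫_0^{2π} f(e^{iθ}) dθ`. -/
def circleAvg (f : ℂ → ℂ) : ℂ :=
  (2 * Real.pi : ℂ)⁻¹ * ∫ θ in (0:ℝ)..(2 * Real.pi), f (Complex.exp (θ * Complex.I))

/-- Fourier coefficient `w_k` of a weight `w` on the unit circle. -/
def fCoeff (w : ℂ → ℂ) (k : ℤ) : ℂ := circleAvg fun ζ => w ζ * ζ ^ (-k)

/-- Toeplitz determinant `I_n[w] = det (w_{j-k})_{j,k=0..n-1}`. -/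
def toeplitzDet (w : ℂ → ℂ) (n : ℕ) : ℂ :=
  (Matrix.of fun j k : Fin n => fCoeff w ((j : ℤ) - (k : ℤ))).det

/-- The Carathéodory function `F(z)`. -/
def cara (w : ℂ → ℂ) (z : ℂ) : ℂ := circleAvg fun ζ => (ζ + z) / (ζ - z) * w ζ

/-- A bi-orthogonal polynomial system (BOPS) on the unit circle for the weight `w`:
polynomials `φ_n`, `φ̄_n` of exact degree `n` with common leading coefficient `κ_n ≠ 0`,
bi-orthonormal with respect to `w`. -/
structure BOPS (w : ℂ → ℂ) where
  φ : ℕ → Polynomial ℂ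
  φb : ℕ → Polynomial ℂ
  κ : ℕ → ℂ
  κ_ne : ∀ n, κ n ≠ 0
  degφ : ∀ n, (φ n).degree ≤ n
  degφb : ∀ n, (φb n).degree ≤ n
  leadφ : ∀ n, (φ n).coeff n = κ n
  leadφb : ∀ n, (φb n).coeff n = κ n
  orth : ∀ m n, circleAvg (fun ζ => w ζ * (φ m).eval ζ * (φb n).eval ζ⁻¹)
      = if m = n then 1 else 0

namespace BOPS

variable {w : ℂ → ℂ}

/-- The reciprocal polynomial `φ*_n(z) = z^n φ̄_n(1/z)`. -/
def φs (S : BOPS w) (n : ℕ) : Polynomial ℂ := (S.φb n).reflect n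

/-- `r_n = φ_n(0)/κ_n`. -/
def r (S : BOPS w) (n : ℕ) : ℂ := (S.φ n).eval 0 / S.κ n

/-- `r̄_n = φ̄_n(0)/κ_n`. -/
def rb (S : BOPS w) (n : ℕ) : ℂ := (S.φb n).eval 0 / S.κ n

/-- Associated function `ξ_n`. -/
def ξ (S : BOPS w) : ℕ → ℂ → ℂ
  | 0, z => S.κ 0 * (fCoeff w 0 + cara w z)
  | n + 1, z => circleAvg fun ζ => (ζ + z) / (ζ - z) * w ζ * (S.φ (n + 1)).eval ζ

/-- Associated function `ξ*_n`. -/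
def ξs (S : BOPS w) : ℕ → ℂ → ℂ
  | 0, z => S.κ 0 * (fCoeff w 0 - cara w z)
  | n + 1, z =>
      -z ^ (n + 1) * circleAvg fun ζ => (ζ + z) / (ζ - z) * w ζ * (S.φb (n + 1)).eval ζ⁻¹

end BOPS

/-- A square matrix of size `K+1` built from a distinguished first row and `K` further rows. -/
def rowMat {K : ℕ} (top : Fin (K + 1) → ℂ) (rest : Fin K → Fin (K + 1) → ℂ) :
    Matrix (Fin (K + 1)) (Fin (K + 1)) ℂ :=
  Matrix.of fun i j => Fin.cases (top j) (fun r => rest r j) i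

end


/-!
Column operations `Cₖ₊₁ ↦ Cₖ₊₁ - z Cₖ`, or the analogous row operations, turn the Toeplitz matrix
of each modified weight into `T = T_{n+1}[w]` with one row replaced by a border vector `v`.
Bi-orthogonality says that `T` maps the coefficient vectors of `φ_n` and `φ*_n` to `κ_n⁻¹ e_n` and
`κ_n⁻¹ e_0`, so by Cramer's rule the bordered determinant is `κ_n I_{n+1}[w]` times the pairing of
`v` with that coefficient vector. For the border `e_n` this gives `κ_n² I_{n+1} = I_n`; for the
polynomial modifications the pairing is `φ_n(z)` or `φ*_n(z)`; for the rational ones it is a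
Fourier coefficient of `φ_n w / (1 - z ζ⁻¹)` or `φ̄_n(1/ζ) w / (ζ - z)`, which the Herglotz kernel
`(ζ + z)/(ζ - z)` expresses through `ξ_n` and `ξ*_n`.
-/

open Finset

local notation "𝕋" => Metric.sphere (0 : ℂ) 1

theorem ne_zero_of_mem_unitSphere {ζ : ℂ} (hζ : ζ ∈ 𝕋) : ζ ≠ 0 := by
  rintro rfl
  simp at hζ

theorem sub_ne_zero_of_mem_unitSphere {z : ℂ} (hz : ‖z‖ ≠ 1) {ζ : ℂ} (hζ : ζ ∈ 𝕋) : ζ - z ≠ 0 := by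
  rw [sub_ne_zero]
  rintro rfl
  exact hz (by simpa using hζ)

theorem continuousOn_zpow_unitSphere (s : ℤ) : ContinuousOn (fun ζ : ℂ => ζ ^ s) 𝕋 :=
  fun ζ hζ => (continuousAt_zpow₀ ζ s (.inl (ne_zero_of_mem_unitSphere hζ))).continuousWithinAt

theorem continuousOn_eval_inv_unitSphere (p : ℂ[X]) : ContinuousOn (fun ζ : ℂ => p.eval ζ⁻¹) 𝕋 :=
  p.continuous.comp_continuousOn (continuousOn_inv₀.mono fun _ hζ => ne_zero_of_mem_unitSphere hζ)

theorem continuousOn_herglotzKernel {z : ℂ} (hz : ‖z‖ ≠ 1) :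
    ContinuousOn (fun ζ => (ζ + z) / (ζ - z)) 𝕋 :=
  (continuousOn_id.add continuousOn_const).div (continuousOn_id.sub continuousOn_const)
    fun _ hζ => sub_ne_zero_of_mem_unitSphere hz hζ

section CircleAverage

theorem circleAvg_eq_circleAverage (f : ℂ → ℂ) : circleAvg f = Real.circleAverage f 0 1 := by
  simp [circleAvg, Real.circleAverage, circleMap, Complex.real_smul]

theorem circleAvg_congr {f g : ℂ → ℂ} (h : Set.EqOn f g 𝕋) : circleAvg f = circleAvg g := by
  simp only [circleAvg_eq_circleAverage]
  exact Real.circleAverage_congr_sphere (by simpa using h)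

theorem circleAvg_add {f g : ℂ → ℂ} (hf : ContinuousOn f 𝕋) (hg : ContinuousOn g 𝕋) :
    circleAvg (fun ζ => f ζ + g ζ) = circleAvg f + circleAvg g := by
  simp only [circleAvg_eq_circleAverage]
  exact Real.circleAverage_fun_add (hf.circleIntegrable zero_le_one)
    (hg.circleIntegrable zero_le_one)

theorem circleAvg_sub {f g : ℂ → ℂ} (hf : ContinuousOn f 𝕋) (hg : ContinuousOn g 𝕋) :
    circleAvg (fun ζ => f ζ - g ζ) = circleAvg f - circleAvg g := by
  simp only [circleAvg_eq_circleAverage]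
  exact Real.circleAverage_fun_sub (hf.circleIntegrable zero_le_one)
    (hg.circleIntegrable zero_le_one)

theorem circleAvg_sum {ι : Type*} (s : Finset ι) {f : ι → ℂ → ℂ}
    (hf : ∀ i ∈ s, ContinuousOn (f i) 𝕋) :
    circleAvg (fun ζ => ∑ i ∈ s, f i ζ) = ∑ i ∈ s, circleAvg (f i) := by
  simp only [circleAvg_eq_circleAverage]
  exact Real.circleAverage_fun_sum fun i hi => (hf i hi).circleIntegrable zero_le_one

theorem circleAvg_const_mul (c : ℂ) (f : ℂ → ℂ) :
    circleAvg (fun ζ => c * f ζ) = c * circleAvg f := by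
  simp only [circleAvg, intervalIntegral.integral_const_mul]
  ring

theorem circleAvg_mul_const (f : ℂ → ℂ) (c : ℂ) :
    circleAvg (fun ζ => f ζ * c) = circleAvg f * c := by
  simp only [mul_comm _ c, circleAvg_const_mul]

end CircleAverage

section FourierCoefficients

theorem fCoeff_zero (f : ℂ → ℂ) : fCoeff f 0 = circleAvg f := by
  simp [fCoeff]

theorem fCoeff_congr {f g : ℂ → ℂ} (h : Set.EqOn f g 𝕋) (t : ℤ) : fCoeff f t = fCoeff g t :=
  circleAvg_congr fun ζ hζ => by simp only [h hζ]

theorem fCoeff_zpow_mul (f : ℂ → ℂ) (s t : ℤ) :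
    fCoeff (fun ζ => ζ ^ s * f ζ) t = fCoeff f (t - s) :=
  circleAvg_congr fun ζ hζ => by
    simp only
    rw [show -(t - s) = s + -t by ring, zpow_add₀ (ne_zero_of_mem_unitSphere hζ)]
    ring

theorem fCoeff_sum {ι : Type*} (s : Finset ι) {f : ι → ℂ → ℂ}
    (hf : ∀ i ∈ s, ContinuousOn (f i) 𝕋) (c : ι → ℂ) (t : ℤ) :
    fCoeff (fun ζ => ∑ i ∈ s, c i * f i ζ) t = ∑ i ∈ s, c i * fCoeff (f i) t := by
  simp only [fCoeff, Finset.sum_mul, mul_assoc]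
  rw [circleAvg_sum s fun i hi =>
    continuousOn_const.fun_mul ((hf i hi).fun_mul (continuousOn_zpow_unitSphere (-t)))]
  simp only [circleAvg_const_mul]

theorem fCoeff_sub_mul {f : ℂ → ℂ} (hf : ContinuousOn f 𝕋) (z : ℂ) (t : ℤ) :
    fCoeff (fun ζ => (ζ - z) * f ζ) t = fCoeff f (t - 1) - z * fCoeff f t := by
  have hζ : ∀ s : ℤ, ContinuousOn (fun ζ => f ζ * ζ ^ s) 𝕋 :=
    fun s => hf.fun_mul (continuousOn_zpow_unitSphere s)
  rw [fCoeff, circleAvg_congr (g := fun ζ => f ζ * ζ ^ (-(t - 1)) - z * (f ζ * ζ ^ (-t))),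
    circleAvg_sub (hζ _) (continuousOn_const.fun_mul (hζ _)), circleAvg_const_mul]
  · rfl
  intro ζ hζ
  simp only
  rw [show -(t - 1) = 1 + -t by ring, zpow_add₀ (ne_zero_of_mem_unitSphere hζ), zpow_one]
  ring

theorem fCoeff_one_sub_mul {f : ℂ → ℂ} (hf : ContinuousOn f 𝕋) (z : ℂ) (t : ℤ) :
    fCoeff (fun ζ => (1 - z * ζ⁻¹) * f ζ) t = fCoeff f t - z * fCoeff f (t + 1) := by
  rw [fCoeff_congr (g := fun ζ => ζ ^ (-1 : ℤ) * ((ζ - z) * f ζ)) fun ζ hζ => by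
      field_simp [ne_zero_of_mem_unitSphere hζ],
    fCoeff_zpow_mul, fCoeff_sub_mul hf, sub_neg_eq_add, add_sub_cancel_right]

theorem fCoeff_mul_eval {f : ℂ → ℂ} (hf : ContinuousOn f 𝕋) {p : ℂ[X]} {N : ℕ}
    (hp : p.natDegree < N) (m : ℤ) :
    fCoeff (fun ζ => f ζ * p.eval ζ) m = ∑ k ∈ range N, fCoeff f (m - k) * p.coeff k := by
  have h : (fun ζ => f ζ * p.eval ζ) =
      fun ζ => ∑ k ∈ range N, p.coeff k * (ζ ^ (k : ℤ) * f ζ) := by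
    funext ζ
    rw [eval_eq_sum_range' hp, Finset.mul_sum]
    exact Finset.sum_congr rfl fun k _ => by rw [zpow_natCast]; ring
  rw [h, fCoeff_sum (f := fun (k : ℕ) ζ => ζ ^ (k : ℤ) * f ζ) _
    fun k _ => (continuousOn_zpow_unitSphere k).fun_mul hf]
  exact Finset.sum_congr rfl fun k _ => by rw [fCoeff_zpow_mul, mul_comm]

theorem fCoeff_mul_eval_inv {f : ℂ → ℂ} (hf : ContinuousOn f 𝕋) {p : ℂ[X]} {N : ℕ}
    (hp : p.natDegree < N) (m : ℤ) :
    fCoeff (fun ζ => f ζ * p.eval ζ⁻¹) m = ∑ k ∈ range N, fCoeff f (m + k) * p.coeff k := by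
  have h : (fun ζ => f ζ * p.eval ζ⁻¹) =
      fun ζ => ∑ k ∈ range N, p.coeff k * (ζ ^ (-k : ℤ) * f ζ) := by
    funext ζ
    rw [eval_eq_sum_range' hp, Finset.mul_sum]
    exact Finset.sum_congr rfl fun k _ => by rw [_root_.zpow_neg, zpow_natCast, inv_pow]; ring
  rw [h, fCoeff_sum (f := fun (k : ℕ) ζ => ζ ^ (-k : ℤ) * f ζ) _
    fun k _ => (continuousOn_zpow_unitSphere _).fun_mul hf]
  exact Finset.sum_congr rfl fun k _ => by rw [fCoeff_zpow_mul, sub_neg_eq_add, mul_comm]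

theorem fCoeff_sub_dotProduct_coeff {f : ℂ → ℂ} (hf : ContinuousOn f 𝕋) {p : ℂ[X]} {n : ℕ}
    (hp : p.natDegree < n + 1) (m : ℤ) :
    (fun k : Fin (n + 1) => fCoeff f (m - k)) ⬝ᵥ (fun k => p.coeff k) =
      fCoeff (fun ζ => f ζ * p.eval ζ) m := by
  rw [fCoeff_mul_eval hf hp, dotProduct,
    ← Fin.sum_univ_eq_sum_range (fun k => fCoeff f (m - k) * p.coeff k)]

end FourierCoefficients

section ModifiedWeights

variable {w : ℂ → ℂ} {z : ℂ}

theorem continuousOn_div_one_sub_mul_inv (hw : ContinuousOn w 𝕋) (hz : ‖z‖ ≠ 1) :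
    ContinuousOn (fun ζ => w ζ / (1 - z * ζ⁻¹)) 𝕋 :=
  hw.div (continuousOn_const.sub (continuousOn_const.fun_mul
    (continuousOn_inv₀.mono fun _ hζ => ne_zero_of_mem_unitSphere hζ))) fun ζ hζ => by
      have := ne_zero_of_mem_unitSphere hζ
      rw [show 1 - z * ζ⁻¹ = (ζ - z) / ζ by field_simp]
      exact div_ne_zero (sub_ne_zero_of_mem_unitSphere hz hζ) this

theorem continuousOn_div_sub (hw : ContinuousOn w 𝕋) (hz : ‖z‖ ≠ 1) :
    ContinuousOn (fun ζ => w ζ / (ζ - z)) 𝕋 :=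
  hw.div (continuousOn_id.sub continuousOn_const) fun _ hζ => sub_ne_zero_of_mem_unitSphere hz hζ

theorem fCoeff_div_one_sub_mul_inv_recurrence (hw : ContinuousOn w 𝕋) (hz : ‖z‖ ≠ 1)
    {g : ℂ → ℂ} (hg : ContinuousOn g 𝕋) (t : ℤ) :
    fCoeff (fun ζ => w ζ / (1 - z * ζ⁻¹) * g ζ) (t - 1) -
        z * fCoeff (fun ζ => w ζ / (1 - z * ζ⁻¹) * g ζ) t =
      fCoeff (fun ζ => w ζ * g ζ) (t - 1) := by
  rw [← fCoeff_sub_mul ((continuousOn_div_one_sub_mul_inv hw hz).fun_mul hg), ← fCoeff_zpow_mul]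
  refine fCoeff_congr (fun ζ hζ => ?_) t
  have := ne_zero_of_mem_unitSphere hζ
  have := sub_ne_zero_of_mem_unitSphere hz hζ
  field_simp

theorem fCoeff_div_sub_recurrence (hw : ContinuousOn w 𝕋) (hz : ‖z‖ ≠ 1) (t : ℤ) :
    fCoeff (fun ζ => w ζ / (ζ - z)) (t - 1) - z * fCoeff (fun ζ => w ζ / (ζ - z)) t =
      fCoeff w t := by
  rw [← fCoeff_sub_mul (continuousOn_div_sub hw hz)]
  refine fCoeff_congr (fun ζ hζ => ?_) t
  have := sub_ne_zero_of_mem_unitSphere hz hζ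
  field_simp

theorem circleAvg_div_one_sub_mul (hw : ContinuousOn w 𝕋) (hz : ‖z‖ ≠ 1) {g : ℂ → ℂ}
    (hg : ContinuousOn g 𝕋) :
    circleAvg (fun ζ => w ζ / (1 - z * ζ⁻¹) * g ζ) =
      (circleAvg (fun ζ => w ζ * g ζ) + circleAvg (fun ζ => (ζ + z) / (ζ - z) * w ζ * g ζ)) /
        2 := by
  rw [circleAvg_congr (g := fun ζ => 2⁻¹ * (w ζ * g ζ) + 2⁻¹ * ((ζ + z) / (ζ - z) * w ζ * g ζ))
      fun ζ hζ => ?_, circleAvg_add (continuousOn_const.fun_mul (hw.fun_mul hg))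
      (continuousOn_const.fun_mul (((continuousOn_herglotzKernel hz).fun_mul hw).fun_mul hg)),
    circleAvg_const_mul, circleAvg_const_mul]
  · ring
  have := ne_zero_of_mem_unitSphere hζ
  have := sub_ne_zero_of_mem_unitSphere hz hζ
  field_simp
  ring

theorem circleAvg_div_sub_mul (hw : ContinuousOn w 𝕋) (hz : ‖z‖ ≠ 1) (hz0 : z ≠ 0) {g : ℂ → ℂ}
    (hg : ContinuousOn g 𝕋) :
    circleAvg (fun ζ => w ζ / (ζ - z) * g ζ) =
      (circleAvg (fun ζ => (ζ + z) / (ζ - z) * w ζ * g ζ) - circleAvg (fun ζ => w ζ * g ζ)) /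
        (2 * z) := by
  rw [circleAvg_congr (g := fun ζ => (2 * z)⁻¹ * ((ζ + z) / (ζ - z) * w ζ * g ζ) -
      (2 * z)⁻¹ * (w ζ * g ζ)) fun ζ hζ => ?_,
    circleAvg_sub
      (continuousOn_const.fun_mul (((continuousOn_herglotzKernel hz).fun_mul hw).fun_mul hg))
      (continuousOn_const.fun_mul (hw.fun_mul hg)), circleAvg_const_mul, circleAvg_const_mul]
  · ring
  have := sub_ne_zero_of_mem_unitSphere hz hζ
  field_simp
  ring

end ModifiedWeights

section Bidiagonal

variable {R : Type*} [CommRing R] {n : ℕ}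

/-- Right multiplication by `unipotentBidiag n z` subtracts from every column but the first `z`
times the column before it; left multiplication subtracts from every row but the last `z` times
the row after it. -/
def unipotentBidiag (n : ℕ) (z : R) : Matrix (Fin (n + 1)) (Fin (n + 1)) R :=
  of fun i j => if j = i then 1 else if (j : ℕ) = i + 1 then -z else 0

theorem det_unipotentBidiag (z : R) : (unipotentBidiag n z).det = 1 := by
  rw [det_of_isUpperTriangular]
  · simp [unipotentBidiag]
  · intro i j (hij : (j : ℕ) < i)
    simp only [unipotentBidiag, of_apply, Fin.ext_iff]
    rw [if_neg (by omega), if_neg (by omega)]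

theorem det_mul_unipotentBidiag (M : Matrix (Fin (n + 1)) (Fin (n + 1)) R) (z : R) :
    (M * unipotentBidiag n z).det = M.det := by
  rw [det_mul, det_unipotentBidiag, mul_one]

theorem det_unipotentBidiag_mul (M : Matrix (Fin (n + 1)) (Fin (n + 1)) R) (z : R) :
    (unipotentBidiag n z * M).det = M.det := by
  rw [det_mul, det_unipotentBidiag, one_mul]

theorem mul_unipotentBidiag_apply_zero (M : Matrix (Fin (n + 1)) (Fin (n + 1)) R) (z : R)
    (i : Fin (n + 1)) : (M * unipotentBidiag n z) i 0 = M i 0 := by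
  simp [mul_apply, unipotentBidiag]

theorem mul_unipotentBidiag_apply_succ (M : Matrix (Fin (n + 1)) (Fin (n + 1)) R) (z : R)
    (i : Fin (n + 1)) (k : Fin n) :
    (M * unipotentBidiag n z) i k.succ = M i k.succ - z * M i k.castSucc := by
  rw [mul_apply, Fintype.sum_eq_add k.succ k.castSucc (Fin.castSucc_lt_succ (i := k)).ne']
  · simp only [unipotentBidiag, Fin.ext_iff, of_apply, Fin.val_succ,
      ↓reduceIte, mul_one, Fin.val_castSucc, Nat.add_eq_left, one_ne_zero, mul_neg]
    ring
  · rintro x ⟨h1, h2⟩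
    rw [show unipotentBidiag n z x k.succ = 0 from ?_, mul_zero]
    simp only [unipotentBidiag, of_apply, ne_eq, Fin.ext_iff, Fin.val_succ,
      Fin.val_castSucc] at h1 h2 ⊢
    rw [if_neg (by omega), if_neg (by omega)]

theorem unipotentBidiag_mul_apply_last (M : Matrix (Fin (n + 1)) (Fin (n + 1)) R) (z : R)
    (k : Fin (n + 1)) : (unipotentBidiag n z * M) (Fin.last n) k = M (Fin.last n) k := by
  rw [mul_apply, Fintype.sum_eq_single (Fin.last n)]
  · simp [unipotentBidiag]
  · intro x hx
    rw [show unipotentBidiag n z (Fin.last n) x = 0 from ?_, zero_mul]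
    simp only [unipotentBidiag, of_apply, ne_eq, Fin.ext_iff, Fin.val_last] at hx ⊢
    rw [if_neg (by omega), if_neg (by omega)]

theorem unipotentBidiag_mul_apply_castSucc (M : Matrix (Fin (n + 1)) (Fin (n + 1)) R) (z : R)
    (j : Fin n) (k : Fin (n + 1)) :
    (unipotentBidiag n z * M) j.castSucc k = M j.castSucc k - z * M j.succ k := by
  rw [mul_apply, Fintype.sum_eq_add j.castSucc j.succ (Fin.castSucc_lt_succ (i := j)).ne]
  · simp only [unipotentBidiag, Fin.ext_iff, of_apply, Fin.val_castSucc, ↓reduceIte, one_mul,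
      Fin.val_succ, Nat.add_eq_left, one_ne_zero, neg_mul]
    ring
  · rintro x ⟨h1, h2⟩
    rw [show unipotentBidiag n z j.castSucc x = 0 from ?_, zero_mul]
    simp only [unipotentBidiag, of_apply, ne_eq, Fin.ext_iff, Fin.val_succ,
      Fin.val_castSucc] at h1 h2 ⊢
    rw [if_neg (by omega), if_neg (by omega)]

theorem det_updateRow_pow (A : Matrix (Fin (n + 1)) (Fin (n + 1)) R) (i : Fin (n + 1)) (z : R) :
    (A.updateRow i fun k => z ^ (k : ℕ)).det = (-1) ^ (i : ℕ) *
      (of fun j k : Fin n => A (i.succAbove j) k.succ - z * A (i.succAbove j) k.castSucc).det := by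
  have hrow : A.updateRow i (fun k => z ^ (k : ℕ)) * unipotentBidiag n z =
      (A * unipotentBidiag n z).updateRow i (Pi.single 0 1) := by
    ext j k
    rcases eq_or_ne j i with rfl | hj
    · cases k using Fin.cases <;>
        simp [mul_unipotentBidiag_apply_zero, mul_unipotentBidiag_apply_succ, pow_succ, mul_comm]
    · cases k using Fin.cases <;>
        simp [mul_unipotentBidiag_apply_zero, mul_unipotentBidiag_apply_succ, hj]
  rw [← det_mul_unipotentBidiag _ z, hrow, ← adjugate_apply, adjugate_fin_succ_eq_det_submatrix,
    Fin.succAbove_zero, Fin.val_zero, add_zero]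
  congr 2
  ext j k
  simp [mul_unipotentBidiag_apply_succ]

end Bidiagonal

theorem det_updateRow_of_mulVec_eq_single {R ι : Type*} [CommRing R] [Fintype ι] [DecidableEq ι]
    {A : Matrix ι ι R} {x : ι → R} {i : ι} {c : R} (hx : A *ᵥ x = Pi.single i c) (v : ι → R) :
    c * (A.updateRow i v).det = A.det * (v ⬝ᵥ x) := by
  have hadj : A.adjugate *ᵥ Pi.single i c = A.det • x := by
    rw [← hx, mulVec_mulVec, adjugate_mul, smul_mulVec, one_mulVec]
  rw [← cramer_transpose_apply, cramer_eq_adjugate_mulVec, ← adjugate_transpose, mulVec_transpose]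
  calc c * (v ᵥ* A.adjugate) i = v ⬝ᵥ (A.adjugate *ᵥ Pi.single i c) := by
        simp [vecMul, dotProduct, mulVec_single, Finset.mul_sum, mul_left_comm, mul_comm]
    _ = A.det * (v ⬝ᵥ x) := by rw [hadj, dotProduct_smul, smul_eq_mul]

section Toeplitz

variable {R : Type*}

def toeplitzMatrix (a : ℤ → R) (n : ℕ) : Matrix (Fin n) (Fin n) R :=
  of fun j k => a (j - k)

theorem toeplitzDet_eq_det (w : ℂ → ℂ) (n : ℕ) :
    toeplitzDet w n = (toeplitzMatrix (fCoeff w) n).det :=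
  rfl

theorem toeplitzMatrix_submatrix_castSucc (a : ℤ → R) (n : ℕ) :
    (toeplitzMatrix a (n + 1)).submatrix Fin.castSucc Fin.castSucc = toeplitzMatrix a n := by
  ext j k
  simp [toeplitzMatrix]

variable [CommRing R]

theorem toeplitzMatrix_mulVec_apply (a : ℤ → R) {n : ℕ} (v : Fin n → R) (m : Fin n) :
    (toeplitzMatrix a n *ᵥ v) m = (fun k : Fin n => a (m - k)) ⬝ᵥ v :=
  rfl

theorem det_toeplitzMatrix_sub_mul_eq_det_updateRow_last (a : ℤ → R) (n : ℕ) (z : R) :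
    (toeplitzMatrix (fun t => a (t - 1) - z * a t) n).det =
      (-1) ^ n * ((toeplitzMatrix a (n + 1)).updateRow (Fin.last n) fun k => z ^ (k : ℕ)).det := by
  rw [det_updateRow_pow, Fin.val_last, ← mul_assoc, ← mul_pow, neg_one_mul, neg_neg, one_pow,
    one_mul]
  congr 1
  ext j k
  simp [toeplitzMatrix, sub_add_eq_sub_sub]

theorem det_toeplitzMatrix_sub_mul_eq_det_updateRow_zero (a : ℤ → R) (n : ℕ) (z : R) :
    (toeplitzMatrix (fun t => a t - z * a (t + 1)) n).det =
      ((toeplitzMatrix a (n + 1)).updateRow 0 fun k => z ^ (k : ℕ)).det := by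
  rw [det_updateRow_pow, Fin.val_zero, pow_zero, one_mul]
  congr 1
  ext j k
  simp [toeplitzMatrix, sub_add_eq_add_sub]

theorem det_toeplitzMatrix_eq_det_updateRow_last {a b : ℤ → R} {z : R}
    (h : ∀ t, b (t - 1) - z * b t = a (t - 1)) (n : ℕ) :
    (toeplitzMatrix b (n + 1)).det =
      ((toeplitzMatrix a (n + 1)).updateRow (Fin.last n) fun k => b (n - k)).det := by
  rw [← det_unipotentBidiag_mul _ z]
  congr 1
  ext j k
  cases j using Fin.lastCases with
  | last => simp [unipotentBidiag_mul_apply_last, toeplitzMatrix]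
  | cast j =>
    have hj := h (j + 1 - k)
    rw [show (j : ℤ) + 1 - k - 1 = j - k by ring] at hj
    rw [unipotentBidiag_mul_apply_castSucc]
    simpa [toeplitzMatrix, (Fin.castSucc_lt_last j).ne] using hj

/-- Subtracting `z` times the next row turns `T[b]` into the rows `1, …, n` of `T[a]` followed by
the border row; moving it to the top is a cyclic permutation of sign `(-1) ^ n`. -/
theorem det_toeplitzMatrix_eq_det_updateRow_zero {a b : ℤ → R} {z : R}
    (h : ∀ t, b (t - 1) - z * b t = a t) (n : ℕ) :
    (toeplitzMatrix b (n + 1)).det =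
      (-1) ^ n * ((toeplitzMatrix a (n + 1)).updateRow 0 fun k => b (n - k)).det := by
  have hrot : unipotentBidiag n z * toeplitzMatrix b (n + 1) =
      ((toeplitzMatrix a (n + 1)).updateRow 0 fun k => b (n - k)).submatrix (finRotate (n + 1))
        id := by
    ext j k
    cases j using Fin.lastCases with
    | last => simp [unipotentBidiag_mul_apply_last, toeplitzMatrix]
    | cast j =>
      have hj := h (j + 1 - k)
      rw [show (j : ℤ) + 1 - k - 1 = j - k by ring] at hj
      rw [unipotentBidiag_mul_apply_castSucc]
      simpa [toeplitzMatrix, Fin.succ_ne_zero] using hj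
  rw [← det_unipotentBidiag_mul _ z, hrot, det_permute, sign_finRotate]
  simp

end Toeplitz

theorem eq_pow_mul_of_eq_mul_succ {M : Type*} [Monoid M] {u : ℕ → M} {z : M} {n : ℕ}
    (h : ∀ m < n, u m = z * u (m + 1)) : u 0 = z ^ n * u n := by
  induction n with
  | zero => simp
  | succ n ih => rw [ih fun m hm => h m (by omega), h n (by omega), pow_succ, mul_assoc]

theorem eq_ite_of_triangular {K : Type*} [Field K] {L : ℕ → K} {q : ℕ → K[X]} {n : ℕ}
    (hq : ∀ k, (q k).coeff k ≠ 0)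
    (h : ∀ k ≤ n, ∑ i ∈ range (k + 1), L i * (q k).coeff i = if k = n then 1 else 0) :
    ∀ k ≤ n, L k = if k = n then ((q n).coeff n)⁻¹ else 0 := by
  intro k
  induction k using Nat.strong_induction_on with
  | _ k ih =>
    intro hk
    have hsum := h k hk
    rw [sum_range_succ, sum_eq_zero fun i hi => by
      have hik := mem_range.1 hi
      rw [ih i hik (by omega), if_neg (by omega), zero_mul], zero_add] at hsum
    split_ifs at hsum ⊢ with hkn
    · subst hkn
      exact eq_inv_of_mul_eq_one_left hsum
    · exact (mul_eq_zero.1 hsum).resolve_right (hq k)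

theorem Polynomial.eval_reflect_of_ne_zero {K : Type*} [Field K] {p : K[X]} {N : ℕ}
    (hp : p.natDegree ≤ N) {x : K} (hx : x ≠ 0) : (p.reflect N).eval x = x ^ N * p.eval x⁻¹ := by
  let _ := invertibleOfNonzero (inv_ne_zero hx)
  have h := eval₂_reflect_mul_pow (RingHom.id K) x⁻¹ N p hp
  rw [invOf_eq_inv, inv_inv, inv_pow] at h
  simp only [eval₂_id] at h
  rw [← h]
  field_simp

theorem Polynomial.pow_dotProduct_coeff {R : Type*} [CommRing R] {p : R[X]} {n : ℕ}
    (hp : p.natDegree < n + 1) (z : R) :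
    (fun k : Fin (n + 1) => z ^ (k : ℕ)) ⬝ᵥ (fun k => p.coeff k) = p.eval z := by
  rw [eval_eq_sum_range' hp, dotProduct, ← Fin.sum_univ_eq_sum_range (fun k => p.coeff k * z ^ k)]
  exact sum_congr rfl fun k _ => mul_comm _ _

namespace BOPS

variable {w : ℂ → ℂ} (S : BOPS w)

theorem natDegree_φ_lt (n : ℕ) : (S.φ n).natDegree < n + 1 :=
  Nat.lt_succ_of_le (natDegree_le_of_degree_le (S.degφ n))

theorem natDegree_φb_lt (n : ℕ) : (S.φb n).natDegree < n + 1 :=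
  Nat.lt_succ_of_le (natDegree_le_of_degree_le (S.degφb n))

theorem natDegree_φs_lt (n : ℕ) : (S.φs n).natDegree < n + 1 :=
  Nat.lt_succ_of_le
    (natDegree_reflect_le.trans (max_le le_rfl (natDegree_le_of_degree_le (S.degφb n))))

theorem φ_zero : S.φ 0 = C (S.κ 0) := by
  simpa [S.leadφ] using eq_C_of_degree_le_zero (p := S.φ 0) (by exact_mod_cast S.degφ 0)

theorem φb_zero : S.φb 0 = C (S.κ 0) := by
  simpa [S.leadφb] using eq_C_of_degree_le_zero (p := S.φb 0) (by exact_mod_cast S.degφb 0)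

theorem fCoeff_mul_φs (f : ℂ → ℂ) (n : ℕ) (t : ℤ) :
    fCoeff (fun ζ => f ζ * (S.φs n).eval ζ) t =
      fCoeff (fun ζ => f ζ * (S.φb n).eval ζ⁻¹) (t - n) := by
  rw [← fCoeff_zpow_mul]
  refine fCoeff_congr (fun ζ hζ => ?_) t
  simp only [φs, eval_reflect_of_ne_zero (natDegree_le_of_degree_le (S.degφb n))
    (ne_zero_of_mem_unitSphere hζ), zpow_natCast]
  ring

/-- Expanding `φ̄_k(1/ζ)` turns the relations `⟨φ_n, φ̄_k⟩ = δ_{nk}`, `k ≤ n`, into a triangular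
system for the moments `(1/2π) ∫ w φ_n ζ^{-i}`, `i ≤ n`. -/
theorem fCoeff_mul_φ (hw : ContinuousOn w 𝕋) {m n : ℕ} (hmn : m ≤ n) :
    fCoeff (fun ζ => w ζ * (S.φ n).eval ζ) m = if m = n then (S.κ n)⁻¹ else 0 := by
  have hL := eq_ite_of_triangular (L := fun i => fCoeff (fun ζ => w ζ * (S.φ n).eval ζ) i)
    (q := S.φb) (n := n) (fun k => S.leadφb k ▸ S.κ_ne k) (fun k _ => ?_) m hmn
  · rwa [S.leadφb] at hL
  have horth := S.orth n k
  rw [← fCoeff_zero, fCoeff_mul_eval_inv (hw.fun_mul (S.φ n).continuous.continuousOn)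
    (S.natDegree_φb_lt k)] at horth
  simpa [eq_comm] using horth

theorem fCoeff_mul_φb_inv (hw : ContinuousOn w 𝕋) {m n : ℕ} (hmn : m ≤ n) :
    fCoeff (fun ζ => w ζ * (S.φb n).eval ζ⁻¹) (-m) = if m = n then (S.κ n)⁻¹ else 0 := by
  have hL := eq_ite_of_triangular (L := fun i => fCoeff (fun ζ => w ζ * (S.φb n).eval ζ⁻¹) (-i))
    (q := S.φ) (n := n) (fun k => S.leadφ k ▸ S.κ_ne k) (fun k _ => ?_) m hmn
  · rwa [S.leadφ] at hL
  have horth : circleAvg (fun ζ => w ζ * (S.φb n).eval ζ⁻¹ * (S.φ k).eval ζ) =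
      if k = n then 1 else 0 := by
    rw [← S.orth k n]
    congr 1
    funext ζ
    ring
  rw [← fCoeff_zero, fCoeff_mul_eval (hw.fun_mul (continuousOn_eval_inv_unitSphere _))
    (S.natDegree_φ_lt k)] at horth
  simpa using horth

theorem toeplitzMatrix_mulVec_coeff_φ (hw : ContinuousOn w 𝕋) (n : ℕ) :
    toeplitzMatrix (fCoeff w) (n + 1) *ᵥ (fun k => (S.φ n).coeff k) =
      Pi.single (Fin.last n) (S.κ n)⁻¹ := by
  ext m
  rw [toeplitzMatrix_mulVec_apply, fCoeff_sub_dotProduct_coeff hw (S.natDegree_φ_lt n),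
    fCoeff_mul_φ S hw m.is_le, Pi.single_apply]
  simp [Fin.ext_iff]

theorem toeplitzMatrix_mulVec_coeff_φs (hw : ContinuousOn w 𝕋) (n : ℕ) :
    toeplitzMatrix (fCoeff w) (n + 1) *ᵥ (fun k => (S.φs n).coeff k) = Pi.single 0 (S.κ n)⁻¹ := by
  ext m
  rw [toeplitzMatrix_mulVec_apply, fCoeff_sub_dotProduct_coeff hw (S.natDegree_φs_lt n),
    fCoeff_mul_φs, show (m : ℤ) - n = -((n - m : ℕ) : ℤ) by omega,
    fCoeff_mul_φb_inv S hw (Nat.sub_le n m), Pi.single_apply]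
  simp only [Fin.ext_iff, Fin.val_zero]
  congr 1
  exact propext (by omega)

theorem κ_sq_mul_toeplitzDet_succ (hw : ContinuousOn w 𝕋) (n : ℕ) :
    S.κ n ^ 2 * toeplitzDet w (n + 1) = toeplitzDet w n := by
  have h := det_updateRow_of_mulVec_eq_single (S.toeplitzMatrix_mulVec_coeff_φ hw n)
    (Pi.single (Fin.last n) 1)
  rw [← adjugate_apply, adjugate_fin_succ_eq_det_submatrix, Fin.succAbove_last,
    toeplitzMatrix_submatrix_castSucc, single_dotProduct, one_mul, Fin.val_last, S.leadφ,
    ← two_mul, pow_mul, neg_one_sq, one_pow, one_mul] at h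
  rw [toeplitzDet_eq_det, toeplitzDet_eq_det]
  field_simp [S.κ_ne n] at h
  linear_combination -h

theorem circleAvg_div_one_sub_mul_φ (hw : ContinuousOn w 𝕋) {z : ℂ} (hz : ‖z‖ ≠ 1) (n : ℕ) :
    circleAvg (fun ζ => w ζ / (1 - z * ζ⁻¹) * (S.φ n).eval ζ) = S.ξ n z / 2 := by
  rw [circleAvg_div_one_sub_mul hw hz (S.φ n).continuous.continuousOn]
  cases n with
  | zero =>
    simp only [S.φ_zero, eval_C, ξ, fCoeff_zero, cara, circleAvg_mul_const]
    ring
  | succ n =>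
    have h := S.fCoeff_mul_φ hw (Nat.zero_le (n + 1))
    rw [if_neg (Nat.succ_ne_zero n).symm, Nat.cast_zero, fCoeff_zero] at h
    rw [h, zero_add, ξ]

theorem circleAvg_div_sub_mul_φb_inv (hw : ContinuousOn w 𝕋) {z : ℂ} (hz : ‖z‖ ≠ 1)
    (hz0 : z ≠ 0) (n : ℕ) :
    circleAvg (fun ζ => w ζ / (ζ - z) * (S.φb n).eval ζ⁻¹) = -S.ξs n z / (2 * z ^ (n + 1)) := by
  rw [circleAvg_div_sub_mul hw hz hz0 (continuousOn_eval_inv_unitSphere _)]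
  cases n with
  | zero =>
    simp only [S.φb_zero, eval_C, ξs, fCoeff_zero, cara, circleAvg_mul_const]
    field_simp
    ring
  | succ n =>
    have h := S.fCoeff_mul_φb_inv hw (Nat.zero_le (n + 1))
    rw [if_neg (Nat.succ_ne_zero n).symm, Nat.cast_zero, neg_zero, fCoeff_zero] at h
    rw [h, sub_zero, ξs]
    field_simp
    ring

theorem toeplitzDet_sub_mul (hw : ContinuousOn w 𝕋) (n : ℕ) (z : ℂ) :
    toeplitzDet (fun ζ => (ζ - z) * w ζ) n =
      (-1) ^ n * toeplitzDet w n * ((S.φ n).eval z / S.κ n) := by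
  have hcramer := det_updateRow_of_mulVec_eq_single (S.toeplitzMatrix_mulVec_coeff_φ hw n)
    fun k => z ^ (k : ℕ)
  rw [pow_dotProduct_coeff (S.natDegree_φ_lt n), inv_mul_eq_iff_eq_mul₀ (S.κ_ne n)] at hcramer
  rw [← S.κ_sq_mul_toeplitzDet_succ hw n, toeplitzDet_eq_det, toeplitzDet_eq_det,
    funext (fCoeff_sub_mul hw z), det_toeplitzMatrix_sub_mul_eq_det_updateRow_last, hcramer]
  field_simp [S.κ_ne n]

theorem toeplitzDet_one_sub_mul (hw : ContinuousOn w 𝕋) (n : ℕ) (z : ℂ) :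
    toeplitzDet (fun ζ => (1 - z * ζ⁻¹) * w ζ) n = toeplitzDet w n * ((S.φs n).eval z / S.κ n) := by
  have hcramer := det_updateRow_of_mulVec_eq_single (S.toeplitzMatrix_mulVec_coeff_φs hw n)
    fun k => z ^ (k : ℕ)
  rw [pow_dotProduct_coeff (S.natDegree_φs_lt n), inv_mul_eq_iff_eq_mul₀ (S.κ_ne n)] at hcramer
  rw [← S.κ_sq_mul_toeplitzDet_succ hw n, toeplitzDet_eq_det, toeplitzDet_eq_det,
    funext (fCoeff_one_sub_mul hw z), det_toeplitzMatrix_sub_mul_eq_det_updateRow_zero, hcramer]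
  field_simp [S.κ_ne n]

theorem toeplitzDet_div_one_sub (hw : ContinuousOn w 𝕋) (n : ℕ) {z : ℂ} (hz : ‖z‖ ≠ 1)
    (hz0 : z ≠ 0) :
    toeplitzDet (fun ζ => w ζ / (1 - z * ζ⁻¹)) (n + 1) =
      toeplitzDet w (n + 1) * (S.κ n * S.ξ n z / (2 * z ^ n)) := by
  -- Orthogonality of `φ_n` to `ζ^m`, `m < n`, makes the Fourier coefficients `0, …, n` of
  -- `w φ_n / (1 - z ζ⁻¹)` a geometric progression of ratio `z⁻¹`.
  have hgeom : S.ξ n z = 2 * z ^ n * fCoeff (fun ζ => w ζ / (1 - z * ζ⁻¹) * (S.φ n).eval ζ) n := by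
    have h := eq_pow_mul_of_eq_mul_succ
      (u := fun m : ℕ => fCoeff (fun ζ => w ζ / (1 - z * ζ⁻¹) * (S.φ n).eval ζ) m) (n := n)
      fun m hm => by
        have hrec :=
          fCoeff_div_one_sub_mul_inv_recurrence hw hz (S.φ n).continuous.continuousOn (m + 1)
        rw [add_sub_cancel_right, S.fCoeff_mul_φ hw hm.le, if_neg hm.ne] at hrec
        push_cast
        linear_combination hrec
    rw [Nat.cast_zero, fCoeff_zero, S.circleAvg_div_one_sub_mul_φ hw hz] at h
    linear_combination 2 * h
  have hshift (t : ℤ) : fCoeff (fun ζ => w ζ / (1 - z * ζ⁻¹)) (t - 1) -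
      z * fCoeff (fun ζ => w ζ / (1 - z * ζ⁻¹)) t = fCoeff w (t - 1) := by
    simpa using fCoeff_div_one_sub_mul_inv_recurrence hw hz continuousOn_const (g := 1) t
  have hcramer := det_updateRow_of_mulVec_eq_single (S.toeplitzMatrix_mulVec_coeff_φ hw n)
    fun k => fCoeff (fun ζ => w ζ / (1 - z * ζ⁻¹)) (n - k)
  rw [fCoeff_sub_dotProduct_coeff (continuousOn_div_one_sub_mul_inv hw hz) (S.natDegree_φ_lt n),
    inv_mul_eq_iff_eq_mul₀ (S.κ_ne n), ← det_toeplitzMatrix_eq_det_updateRow_last hshift]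
    at hcramer
  rw [toeplitzDet_eq_det, toeplitzDet_eq_det, hcramer, hgeom, mul_div_assoc,
    mul_div_cancel_left₀ _ (mul_ne_zero two_ne_zero (pow_ne_zero n hz0))]
  ring

theorem toeplitzDet_div_sub (hw : ContinuousOn w 𝕋) (n : ℕ) {z : ℂ} (hz : ‖z‖ ≠ 1) (hz0 : z ≠ 0) :
    toeplitzDet (fun ζ => w ζ / (ζ - z)) (n + 1) =
      (-1) ^ (n + 1) * toeplitzDet w (n + 1) * (S.κ n * S.ξs n z / (2 * z ^ (n + 1))) := by
  have hcramer := det_updateRow_of_mulVec_eq_single (S.toeplitzMatrix_mulVec_coeff_φs hw n)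
    fun k => fCoeff (fun ζ => w ζ / (ζ - z)) (n - k)
  rw [fCoeff_sub_dotProduct_coeff (continuousOn_div_sub hw hz) (S.natDegree_φs_lt n),
    fCoeff_mul_φs, sub_self, fCoeff_zero, S.circleAvg_div_sub_mul_φb_inv hw hz hz0,
    inv_mul_eq_iff_eq_mul₀ (S.κ_ne n)] at hcramer
  rw [toeplitzDet_eq_det, toeplitzDet_eq_det,
    det_toeplitzMatrix_eq_det_updateRow_zero (fCoeff_div_sub_recurrence hw hz), hcramer]
  field_simp
  ring

end BOPS

theorem toeplitz_of_modified_weights_general (w : ℂ → ℂ)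
    (hw : ContinuousOn w (Metric.sphere (0 : ℂ) 1))
    (S : BOPS w) :
    (∀ (n : ℕ) (z : ℂ),
      toeplitzDet (fun ζ => (ζ - z) * w ζ) n
          = (-1) ^ n * toeplitzDet w n * ((S.φ n).eval z / S.κ n) ∧
      toeplitzDet (fun ζ => (1 - z * ζ⁻¹) * w ζ) n
          = toeplitzDet w n * ((S.φs n).eval z / S.κ n)) ∧
    (∀ (n : ℕ) (z : ℂ), ‖z‖ ≠ 1 → z ≠ 0 →
      toeplitzDet (fun ζ => w ζ / (1 - z * ζ⁻¹)) (n + 1)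
          = toeplitzDet w (n + 1) * (S.κ n * S.ξ n z / (2 * z ^ n)) ∧
      toeplitzDet (fun ζ => w ζ / (ζ - z)) (n + 1)
          = (-1) ^ (n + 1) * toeplitzDet w (n + 1)
              * (S.κ n * S.ξs n z / (2 * z ^ (n + 1)))) := by
  exact ⟨fun n z => ⟨S.toeplitzDet_sub_mul hw n z, S.toeplitzDet_one_sub_mul hw n z⟩,
    fun n z hz hz0 => ⟨S.toeplitzDet_div_one_sub hw n hz hz0, S.toeplitzDet_div_sub hw n hz hz0⟩⟩

/-- Toeplitz determinants of elementarily modified weights in terms of the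
bi-orthogonal polynomials and associated functions of the original weight. -/
theorem toeplitz_of_modified_weights (w : ℂ → ℂ)
    (hw : ContinuousOn w (Metric.sphere (0 : ℂ) 1))
    (hI : ∀ n, toeplitzDet w n ≠ 0) (S : BOPS w) :
    (∀ (n : ℕ) (z : ℂ),
      toeplitzDet (fun ζ => (ζ - z) * w ζ) n
          = (-1) ^ n * toeplitzDet w n * ((S.φ n).eval z / S.κ n) ∧
      toeplitzDet (fun ζ => (1 - z * ζ⁻¹) * w ζ) n
          = toeplitzDet w n * ((S.φs n).eval z / S.κ n)) ∧
    (∀ (n : ℕ) (z : ℂ), ‖z‖ ≠ 1 → z ≠ 0 →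
      toeplitzDet (fun ζ => w ζ / (1 - z * ζ⁻¹)) (n + 1)
          = toeplitzDet w (n + 1) * (S.κ n * S.ξ n z / (2 * z ^ n)) ∧
      toeplitzDet (fun ζ => w ζ / (ζ - z)) (n + 1)
          = (-1) ^ (n + 1) * toeplitzDet w (n + 1)
              * (S.κ n * S.ξs n z / (2 * z ^ (n + 1)))) :=
  toeplitz_of_modified_weights_general w hw S
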